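/- Let k ≥ 1. The map n ↦ f_{k,n} = {F_{k,n}, F_{k,n+1}} from (ℕ, |·|) to (X, d_{φ_k}) is a (1,1)-quasi-isometric embedding: for all natural numbers m, n ≥ 1, |m - n| - 1 ≤ d_{φ_k}(f_{k,m}, f_{k,n}) ≤ |m - n| + 1. -/
import Mathlib


/-- The `k`-Fibonacci numbers: `F_{k,0} = 0`, `F_{k,1} = 1`,
`F_{k,n+2} = k·F_{k,n+1} + F_{k,n}`. -/
def kfib (k : ℕ) : ℕ → ℕ
  | 0 => 0
  | 1 => 1
  | n + 2 => k * kfib k (n + 1) + kfib k n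

/-- `q n₁ n₂ m` is the minimum of `|x| + |y|` over integer solutions of `m = n₁·x + n₂·y`. -/
noncomputable def q (n₁ n₂ m : ℕ) : ℕ :=
  sInf {s : ℕ | ∃ x y : ℤ, (m : ℤ) = (n₁ : ℤ) * x + (n₂ : ℤ) * y ∧ s = x.natAbs + y.natAbs}

/-- `qPair n₁ n₂ m₁ m₂ = max (q_{n}(m₁)) (q_{n}(m₂))` for pairs `n = {n₁,n₂}`, `m = {m₁,m₂}`. -/
noncomputable def qPair (n₁ n₂ m₁ m₂ : ℕ) : ℕ := max (q n₁ n₂ m₁) (q n₁ n₂ m₂)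

/-- `dA a m₁ m₂ n₁ n₂ = log_a (max (q_n(m), q_m(n)))`. -/
noncomputable def dA (a : ℝ) (m₁ m₂ n₁ n₂ : ℕ) : ℝ :=
  Real.logb a (max (qPair n₁ n₂ m₁ m₂) (qPair m₁ m₂ n₁ n₂))

lemma kfib_zero (k : ℕ) : kfib k 0 = 0 := rfl
lemma kfib_one (k : ℕ) : kfib k 1 = 1 := rfl
lemma kfib_rec (k n : ℕ) : kfib k (n+2) = k * kfib k (n+1) + kfib k n := rfl
lemma kfib_two (k : ℕ) : kfib k 2 = k := by rw [kfib_rec, kfib_one, kfib_zero]; ring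

lemma kfib_pos (k : ℕ) (hk : 1 ≤ k) : ∀ n, 1 ≤ kfib k (n+1) := by
  intro n
  induction n using Nat.twoStepInduction with
  | zero => simp [kfib_one]
  | one => simpa [kfib_two] using hk
  | more n ih1 ih2 =>
    rw [kfib_rec]
    nlinarith [ih2]

lemma kfib_mono (k : ℕ) (hk : 1 ≤ k) (n : ℕ) : kfib k n ≤ kfib k (n+1) := by
  cases n with
  | zero => simp [kfib_zero]
  | succ n => rw [kfib_rec]; nlinarith [kfib_pos k hk n]

lemma kfib_add (k a : ℕ) : ∀ b, kfib k (a+b+1) = kfib k (a+1) * kfib k (b+1) + kfib k a * kfib k b := by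
  intro b
  induction b using Nat.twoStepInduction with
  | zero => simp [kfib_one, kfib_zero]
  | one =>
    have e : a + 1 + 1 = a + 2 := rfl
    rw [e, kfib_rec, kfib_two, kfib_one]; ring
  | more b ih1 ih2 =>
    have e : a + (b+2) + 1 = (a+b+1) + 2 := by omega
    rw [e, kfib_rec]
    have e2 : a + b + 2 = a + (b+1) + 1 := by omega
    have e4 : kfib k (b+1+1) = k * kfib k (b+1) + kfib k b := rfl
    have e5 : kfib k (b+2+1) = k * kfib k (b+2) + kfib k (b+1) := rfl
    rw [e2, ih2, ih1, e4, e5, kfib_rec k b]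
    ring

lemma kfib_docagne (k n : ℕ) : ∀ g : ℕ,
    ((-1:ℤ))^g * kfib k n = kfib k (n+g) * kfib k (g+1) - kfib k (n+g+1) * kfib k g := by
  intro g
  induction g with
  | zero => simp [kfib_one, kfib_zero]
  | succ g ih =>
    have e1 : kfib k (g+1+1) = k * kfib k (g+1) + kfib k g := rfl
    have e2 : kfib k (n+(g+1)+1) = k * kfib k (n+g+1) + kfib k (n+g) := by
      have : n+(g+1)+1 = (n+g)+2 := by omega
      rw [this, kfib_rec]
    have e3 : n + (g+1) = n + g + 1 := by omega
    rw [e3] at e2 ⊢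
    push_cast [e1, e2]
    linear_combination (-1 : ℤ) * ih


noncomputable def Phi (k : ℕ) : ℝ := ((k : ℝ) + Real.sqrt ((k:ℝ) ^ 2 + 4)) / 2

lemma phi_gt_one (k : ℕ) (hk : 1 ≤ k) : 1 < Phi k := by
  have hk1 : (1:ℝ) ≤ k := by exact_mod_cast hk
  have hs0 : 0 ≤ Real.sqrt ((k:ℝ)^2+4) := Real.sqrt_nonneg _
  have hs : Real.sqrt ((k:ℝ)^2+4) ^ 2 = (k:ℝ)^2+4 := Real.sq_sqrt (by positivity)
  rw [Phi]
  nlinarith [sq_nonneg (Real.sqrt ((k:ℝ)^2+4) - 2)]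

lemma phi_le (k : ℕ) : Phi k ≤ (k : ℝ) + 1 := by
  have hs0 : 0 ≤ Real.sqrt ((k:ℝ)^2+4) := Real.sqrt_nonneg _
  have hs : Real.sqrt ((k:ℝ)^2+4) ^ 2 = (k:ℝ)^2+4 := Real.sq_sqrt (by positivity)
  have hk0 : (0:ℝ) ≤ k := by positivity
  rw [Phi]
  nlinarith [sq_nonneg (Real.sqrt ((k:ℝ)^2+4) - ((k:ℝ)+2))]

lemma phi_ge (k : ℕ) : (k : ℝ) ≤ Phi k := by
  have hs0 : 0 ≤ Real.sqrt ((k:ℝ)^2+4) := Real.sqrt_nonneg _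
  have hs : Real.sqrt ((k:ℝ)^2+4) ^ 2 = (k:ℝ)^2+4 := Real.sq_sqrt (by positivity)
  have hk0 : (0:ℝ) ≤ k := by positivity
  rw [Phi]
  nlinarith [sq_nonneg (Real.sqrt ((k:ℝ)^2+4) - (k:ℝ))]

lemma phi_sq (k : ℕ) : Phi k ^ 2 = k * Phi k + 1 := by
  have hs : Real.sqrt ((k:ℝ)^2+4) ^ 2 = (k:ℝ)^2+4 := Real.sq_sqrt (by positivity)
  rw [Phi]
  linear_combination hs / 4

lemma kfib_le_pow (k : ℕ) (hk : 1 ≤ k) : ∀ a, (kfib k (a+1) : ℝ) ≤ Phi k ^ a := by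
  intro a
  induction a using Nat.twoStepInduction with
  | zero => simp [kfib_one]
  | one =>
    rw [kfib_two, pow_one]
    exact phi_ge k
  | more a ih1 ih2 =>
    have e : kfib k (a+2+1) = k * kfib k (a+2) + kfib k (a+1) := rfl
    have hΦ0 : (0:ℝ) < Phi k := lt_trans one_pos (phi_gt_one k hk)
    have hk0 : (0:ℝ) ≤ (k:ℝ) := by positivity
    calc ((kfib k (a+2+1)) : ℝ) = k * kfib k (a+1+1) + kfib k (a+1) := by rw [e]; push_cast; ring
      _ ≤ k * Phi k ^ (a+1) + Phi k ^ a := by gcongr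
      _ = Phi k ^ (a+2) := by linear_combination (-(Phi k ^ a)) * (phi_sq k)

lemma pow_mul_le_kfib (k : ℕ) (hk : 1 ≤ k) (a : ℕ) (ha : 1 ≤ a) :
    ∀ h, Phi k ^ h * (kfib k a : ℝ) ≤ kfib k (a+h+1) := by
  intro h
  have hΦ0 : (0:ℝ) < Phi k := lt_trans one_pos (phi_gt_one k hk)
  have hF0 : (0:ℝ) ≤ (kfib k a : ℝ) := by positivity
  induction h using Nat.twoStepInduction with
  | zero =>
    simpa using (by exact_mod_cast kfib_mono k hk a : ((kfib k a : ℝ) ≤ kfib k (a+1)))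
  | one =>
    have e : kfib k (a+1+1) = k * kfib k (a+1) + kfib k a := rfl
    have h1 : (kfib k a : ℝ) ≤ kfib k (a+1) := by exact_mod_cast kfib_mono k hk a
    have h2 : Phi k ≤ (k:ℝ) + 1 := phi_le k
    have hk1 : (1:ℝ) ≤ (k:ℝ) := by exact_mod_cast hk
    rw [pow_one, e]
    push_cast
    nlinarith [mul_le_mul_of_nonneg_right h2 hF0]
  | more h ih1 ih2 =>
    have e : kfib k (a+(h+2)+1) = k * kfib k (a+(h+1)+1) + kfib k (a+h+1) := rfl
    have hk0 : (0:ℝ) ≤ (k:ℝ) := by positivity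
    calc Phi k ^ (h+2) * (kfib k a : ℝ)
        = k * (Phi k ^ (h+1) * kfib k a) + Phi k ^ h * kfib k a := by
          linear_combination (Phi k ^ h * (kfib k a : ℝ)) * (phi_sq k)
      _ ≤ k * kfib k (a+(h+1)+1) + kfib k (a+h+1) := by gcongr
      _ = kfib k (a+(h+2)+1) := by rw [e]; push_cast; ring
lemma q_le (n₁ n₂ m : ℕ) (x y : ℤ) (h : (m:ℤ) = (n₁:ℤ) * x + (n₂:ℤ) * y) :
    q n₁ n₂ m ≤ x.natAbs + y.natAbs :=
  Nat.sInf_le ⟨x, y, h, rfl⟩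

lemma le_q (n₁ n₂ m : ℕ) (h12 : n₁ ≤ n₂) (x y : ℤ)
    (h : (m:ℤ) = (n₁:ℤ) * x + (n₂:ℤ) * y) :
    (m:ℤ) ≤ (q n₁ n₂ m : ℤ) * n₂ := by
  have hne : {s : ℕ | ∃ x y : ℤ, (m : ℤ) = (n₁ : ℤ) * x + (n₂ : ℤ) * y ∧
      s = x.natAbs + y.natAbs}.Nonempty := ⟨x.natAbs + y.natAbs, x, y, h, rfl⟩
  obtain ⟨a, b, hab, hs⟩ := Nat.sInf_mem hne
  rw [q, hs]
  push_cast [Int.natCast_natAbs]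
  have h1 : (0:ℤ) ≤ n₁ := by positivity
  have h2 : (0:ℤ) ≤ n₂ := by positivity
  have h12' : (n₁:ℤ) ≤ n₂ := by exact_mod_cast h12
  nlinarith [mul_le_mul_of_nonneg_left (le_abs_self a) h1,
    mul_le_mul_of_nonneg_left (le_abs_self b) h2,
    mul_le_mul_of_nonneg_right h12' (abs_nonneg a), hab]

lemma kfib_pos' (k : ℕ) (hk : 1 ≤ k) (n : ℕ) (hn : 1 ≤ n) : 1 ≤ kfib k n := by
  obtain ⟨m, rfl⟩ : ∃ m, n = m + 1 := ⟨n - 1, by omega⟩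
  exact kfib_pos k hk m

lemma key_bounds (k : ℕ) (hk : 1 ≤ k) (n : ℕ) (hn : 1 ≤ n) (g : ℕ) :
    Phi k ^ g ≤ Phi k * (max (qPair (kfib k n) (kfib k (n+1)) (kfib k (n+g)) (kfib k (n+g+1)))
      (qPair (kfib k (n+g)) (kfib k (n+g+1)) (kfib k n) (kfib k (n+1))) : ℕ) ∧
    ((max (qPair (kfib k n) (kfib k (n+1)) (kfib k (n+g)) (kfib k (n+g+1)))
      (qPair (kfib k (n+g)) (kfib k (n+g+1)) (kfib k n) (kfib k (n+1))) : ℕ) : ℝ)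
      ≤ Phi k ^ (g+1) := by
  have hΦ1 : 1 < Phi k := phi_gt_one k hk
  have hΦ0 : (0:ℝ) < Phi k := lt_trans one_pos hΦ1
  have hFn : 1 ≤ kfib k n := kfib_pos' k hk n hn
  have hFn1 : 1 ≤ kfib k (n+1) := kfib_pos k hk n
  cases g with
  | zero =>
    rw [show n+0 = n from rfl]
    have hq1 : q (kfib k n) (kfib k (n+1)) (kfib k n) ≤ 1 := by
      have := q_le (kfib k n) (kfib k (n+1)) (kfib k n) 1 0 (by push_cast; ring)
      simpa using this
    have hq2 : q (kfib k n) (kfib k (n+1)) (kfib k (n+1)) ≤ 1 := by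
      have := q_le (kfib k n) (kfib k (n+1)) (kfib k (n+1)) 0 1 (by push_cast; ring)
      simpa using this
    have hq0 : 1 ≤ q (kfib k n) (kfib k (n+1)) (kfib k n) := by
      rcases Nat.eq_zero_or_pos (q (kfib k n) (kfib k (n+1)) (kfib k n)) with h0 | h0
      · exfalso
        have := le_q (kfib k n) (kfib k (n+1)) (kfib k n) (kfib_mono k hk n) 1 0
          (by push_cast; ring)
        rw [h0] at this
        simp at this
        omega
      · exact h0
    have hNle : max (qPair (kfib k n) (kfib k (n+1)) (kfib k n) (kfib k (n+1)))
        (qPair (kfib k n) (kfib k (n+1)) (kfib k n) (kfib k (n+1))) ≤ 1 := by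
      simp only [qPair, max_le_iff]
      exact ⟨⟨hq1, hq2⟩, hq1, hq2⟩
    have hNge : 1 ≤ max (qPair (kfib k n) (kfib k (n+1)) (kfib k n) (kfib k (n+1)))
        (qPair (kfib k n) (kfib k (n+1)) (kfib k n) (kfib k (n+1))) :=
      le_trans hq0 (le_trans (le_max_left _ _) (le_max_left _ _))
    constructor
    · have h1 : (1:ℝ) ≤ (max (qPair (kfib k n) (kfib k (n+1)) (kfib k n) (kfib k (n+1)))
          (qPair (kfib k n) (kfib k (n+1)) (kfib k n) (kfib k (n+1))) : ℕ) := by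
        exact_mod_cast hNge
      rw [pow_zero]
      nlinarith
    · have h1 : ((max (qPair (kfib k n) (kfib k (n+1)) (kfib k n) (kfib k (n+1)))
          (qPair (kfib k n) (kfib k (n+1)) (kfib k n) (kfib k (n+1))) : ℕ) : ℝ) ≤ 1 := by
        exact_mod_cast hNle
      rw [pow_one]
      linarith
  | succ h =>
    rw [show n+(h+1) = n+h+1 from rfl, show n+h+1+1 = n+h+2 from rfl]
    -- representations
    have ra : kfib k (n+h+1) = kfib k (n+1) * kfib k (h+1) + kfib k n * kfib k h :=
      kfib_add k n h
    have rb : kfib k (n+h+2) = kfib k (n+1) * kfib k (h+2) + kfib k n * kfib k (h+1) := by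
      have := kfib_add k n (h+1)
      rw [show n+(h+1) = n+h+1 by omega] at this
      rwa [show n+h+1+1 = n+h+2 by omega, show h+1+1 = h+2 by omega] at this
    have doc1 : ((-1:ℤ))^(h+1) * kfib k n
        = kfib k (n+h+1) * kfib k (h+2) - kfib k (n+h+2) * kfib k (h+1) := by
      have := kfib_docagne k n (h+1)
      rw [show n+(h+1) = n+h+1 by omega] at this
      rwa [show n+h+1+1 = n+h+2 by omega, show h+1+1 = h+2 by omega] at this
    have doc2 : ((-1:ℤ))^h * kfib k (n+1)
        = kfib k (n+h+1) * kfib k (h+1) - kfib k (n+h+2) * kfib k h := by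
      have := kfib_docagne k (n+1) h
      have e1 : n+1+h = n+h+1 := by omega
      rw [e1] at this
      rwa [show n+h+1+1 = n+h+2 by omega] at this
    -- q bounds
    have hb1 : q (kfib k n) (kfib k (n+1)) (kfib k (n+h+1)) ≤ kfib k h + kfib k (h+1) := by
      have := q_le (kfib k n) (kfib k (n+1)) (kfib k (n+h+1))
        (kfib k h) (kfib k (h+1)) (by push_cast [ra]; ring)
      simpa using this
    have hb2 : q (kfib k n) (kfib k (n+1)) (kfib k (n+h+2)) ≤ kfib k (h+1) + kfib k (h+2) := by
      have := q_le (kfib k n) (kfib k (n+1)) (kfib k (n+h+2))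
        (kfib k (h+1)) (kfib k (h+2)) (by push_cast [rb]; ring)
      simpa using this
    have hb3 : q (kfib k (n+h+1)) (kfib k (n+h+2)) (kfib k n) ≤ kfib k (h+2) + kfib k (h+1) := by
      rcases neg_one_pow_eq_or ℤ (h+1) with he | he <;> rw [he] at doc1
      · have := q_le (kfib k (n+h+1)) (kfib k (n+h+2)) (kfib k n)
          (kfib k (h+2)) (-(kfib k (h+1))) (by linear_combination doc1)
        simpa using this
      · have := q_le (kfib k (n+h+1)) (kfib k (n+h+2)) (kfib k n)
          (-(kfib k (h+2))) (kfib k (h+1)) (by linear_combination -doc1)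
        simpa using this
    have hb4 : q (kfib k (n+h+1)) (kfib k (n+h+2)) (kfib k (n+1))
        ≤ kfib k (h+1) + kfib k h := by
      rcases neg_one_pow_eq_or ℤ h with he | he <;> rw [he] at doc2
      · have := q_le (kfib k (n+h+1)) (kfib k (n+h+2)) (kfib k (n+1))
          (kfib k (h+1)) (-(kfib k h)) (by linear_combination doc2)
        simpa using this
      · have := q_le (kfib k (n+h+1)) (kfib k (n+h+2)) (kfib k (n+1))
          (-(kfib k (h+1))) (kfib k h) (by linear_combination -doc2)
        simpa using this
    have mono1 : kfib k h ≤ kfib k (h+1) := kfib_mono k hk h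
    have mono2 : kfib k (h+1) ≤ kfib k (h+2) := kfib_mono k hk (h+1)
    -- upper bound for N
    have hNM : max (qPair (kfib k n) (kfib k (n+1)) (kfib k (n+h+1)) (kfib k (n+h+2)))
        (qPair (kfib k (n+h+1)) (kfib k (n+h+2)) (kfib k n) (kfib k (n+1)))
        ≤ kfib k (h+1) + kfib k (h+2) := by
      simp only [qPair, max_le_iff]
      omega
    have hM3 : kfib k (h+1) + kfib k (h+2) ≤ kfib k (h+3) := by
      have e : kfib k (h+3) = k * kfib k (h+2) + kfib k (h+1) := rfl
      nlinarith
    have hpow3 : ((kfib k (h+3)) : ℝ) ≤ Phi k ^ (h+2) := kfib_le_pow k hk (h+2)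
    -- lower bound via q (kfib n) (kfib (n+1)) (kfib (n+h+2))
    have hrep : ((kfib k (n+h+2)) : ℤ)
        = (kfib k n : ℤ) * (kfib k (h+1)) + (kfib k (n+1) : ℤ) * (kfib k (h+2)) := by
      push_cast [rb]; ring
    have hq := le_q (kfib k n) (kfib k (n+1)) (kfib k (n+h+2)) (kfib_mono k hk n) _ _ hrep
    have hpow := pow_mul_le_kfib k hk (n+1) (by omega) h
    rw [show n+1+h+1 = n+h+2 from by omega] at hpow
    have hFn1R : (1:ℝ) ≤ (kfib k (n+1) : ℝ) := by exact_mod_cast hFn1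
    have hqR : ((kfib k (n+h+2)) : ℝ)
        ≤ (q (kfib k n) (kfib k (n+1)) (kfib k (n+h+2)) : ℝ) * (kfib k (n+1)) := by
      exact_mod_cast hq
    have hΦh : Phi k ^ h ≤ (q (kfib k n) (kfib k (n+1)) (kfib k (n+h+2)) : ℝ) := by
      have h1 : Phi k ^ h * (kfib k (n+1) : ℝ)
          ≤ (q (kfib k n) (kfib k (n+1)) (kfib k (n+h+2)) : ℝ) * (kfib k (n+1)) := by
        linarith
      exact le_of_mul_le_mul_right h1 (by linarith)
    have hqN : q (kfib k n) (kfib k (n+1)) (kfib k (n+h+2))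
        ≤ max (qPair (kfib k n) (kfib k (n+1)) (kfib k (n+h+1)) (kfib k (n+h+2)))
          (qPair (kfib k (n+h+1)) (kfib k (n+h+2)) (kfib k n) (kfib k (n+1))) :=
      le_trans (le_max_right _ _) (le_max_left _ _)
    constructor
    · have h1 : Phi k ^ h ≤ ((max (qPair (kfib k n) (kfib k (n+1)) (kfib k (n+h+1))
          (kfib k (n+h+2))) (qPair (kfib k (n+h+1)) (kfib k (n+h+2)) (kfib k n)
          (kfib k (n+1))) : ℕ) : ℝ) := by
        refine le_trans hΦh ?_
        exact_mod_cast hqN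
      calc Phi k ^ (h+1) = Phi k * Phi k ^ h := by ring
        _ ≤ _ := by gcongr
    · have h1 : ((max (qPair (kfib k n) (kfib k (n+1)) (kfib k (n+h+1)) (kfib k (n+h+2)))
          (qPair (kfib k (n+h+1)) (kfib k (n+h+2)) (kfib k n) (kfib k (n+1))) : ℕ) : ℝ)
          ≤ (kfib k (h+3) : ℝ) := by
        exact_mod_cast le_trans hNM hM3
      exact le_trans h1 hpow3

lemma dA_comm (a : ℝ) (m₁ m₂ n₁ n₂ : ℕ) : dA a m₁ m₂ n₁ n₂ = dA a n₁ n₂ m₁ m₂ := by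
  rw [dA, dA, max_comm]

lemma aux_main (k : ℕ) (hk : 1 ≤ k) (n g : ℕ) (hn : 1 ≤ n) :
    (g:ℝ) - 1 ≤ dA (Phi k) (kfib k (n+g)) (kfib k (n+g+1)) (kfib k n) (kfib k (n+1)) ∧
    dA (Phi k) (kfib k (n+g)) (kfib k (n+g+1)) (kfib k n) (kfib k (n+1)) ≤ (g:ℝ) + 1 := by
  have hΦ1 : 1 < Phi k := phi_gt_one k hk
  have hΦ0 : (0:ℝ) < Phi k := lt_trans one_pos hΦ1
  obtain ⟨hlow, hup⟩ := key_bounds k hk n hn g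
  set N : ℕ := max (qPair (kfib k n) (kfib k (n+1)) (kfib k (n+g)) (kfib k (n+g+1)))
      (qPair (kfib k (n+g)) (kfib k (n+g+1)) (kfib k n) (kfib k (n+1))) with hNdef
  have hd : dA (Phi k) (kfib k (n+g)) (kfib k (n+g+1)) (kfib k n) (kfib k (n+1))
      = Real.logb (Phi k) (N : ℝ) := by
    rw [dA, hNdef]
    norm_cast
  have hN0 : (0:ℝ) < (N : ℝ) := by nlinarith [pow_pos hΦ0 g]
  constructor
  · rw [hd]
    have h1 : Phi k ^ g / Phi k ≤ (N : ℝ) := by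
      rw [div_le_iff₀ hΦ0]; nlinarith
    have h2 := (Real.logb_le_logb hΦ1 (by positivity) hN0).2 h1
    rw [Real.logb_div (by positivity) (by positivity), Real.logb_pow,
      Real.logb_self_eq_one hΦ1] at h2
    linarith
  · rw [hd]
    have h2 := (Real.logb_le_logb hΦ1 hN0 (pow_pos hΦ0 (g+1))).2 hup
    rw [Real.logb_pow, Real.logb_self_eq_one hΦ1] at h2
    push_cast at h2
    linarith


/-- For `k ≥ 1`, the map `n ↦ f_{k,n} = {F_{k,n}, F_{k,n+1}}` is a (1,1)-quasi-isometric
embedding of `(ℕ, |·|)` into `(𝒳, d_{φ_k})`, `φ_k = (k + √(k²+4))/2`: for all `m, n ≥ 1`,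
`|m - n| - 1 ≤ d_{φ_k}(f_{k,m}, f_{k,n}) ≤ |m - n| + 1`. -/
theorem stmt_17 (k : ℕ) (hk : 1 ≤ k) (m n : ℕ) (hm : 1 ≤ m) (hn : 1 ≤ n) :
    |(m : ℝ) - n| - 1 ≤
      dA ((k + Real.sqrt (k ^ 2 + 4)) / 2)
        (kfib k m) (kfib k (m + 1)) (kfib k n) (kfib k (n + 1)) ∧
    dA ((k + Real.sqrt (k ^ 2 + 4)) / 2)
        (kfib k m) (kfib k (m + 1)) (kfib k n) (kfib k (n + 1)) ≤
      |(m : ℝ) - n| + 1 := by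

  have hphi : ((k : ℝ) + Real.sqrt ((k:ℝ) ^ 2 + 4)) / 2 = Phi k := rfl
  rw [hphi]
  rcases le_total n m with h | h
  · obtain ⟨g, rfl⟩ := Nat.exists_eq_add_of_le h
    have habs : |((n + g : ℕ) : ℝ) - (n : ℝ)| = g := by
      push_cast
      rw [add_sub_cancel_left]
      exact abs_of_nonneg (by positivity)
    rw [habs]
    exact aux_main k hk n g hn
  · obtain ⟨g, rfl⟩ := Nat.exists_eq_add_of_le h
    have habs : |(m : ℝ) - ((m + g : ℕ) : ℝ)| = g := by
      push_cast
      rw [abs_sub_comm, add_sub_cancel_left]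
      exact abs_of_nonneg (by positivity)
    rw [habs, dA_comm]
    exact aux_main k hk m g hm
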